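/- Let λ, γ, ν > 0 and let ξ : ℝ → ℝⁿ be a function. Let ε̃ : ℝ → ℝⁿ and Ã : ℝ → ℝ^{n×n} be differentiable and define ε(t) := Ã(t) ξ(t) + ε̃(t). Suppose ε̃'(t) = −λ ε̃(t) and Ã'(t) = −γ ε(t) ξ(t)ᵀ / (1 + ν |ξ(t)| |ε(t)|) for all t (the normalized gradient identifier error dynamics, without parameter projection). Then V_A(t) := λ⁻¹ |ε̃(t)|² + (2γ)⁻¹ ‖Ã(t)‖_F² satisfies V_A'(t) ≤ −|ε̃(t)|² ≤ 0 for all t, and consequently λ⁻¹|ε̃(t)|² + (2γ)⁻¹‖Ã(t)‖_F² ≤ λ⁻¹|ε̃(0)|² + (2γ)⁻¹‖Ã(0)‖_F² for all t ≥ 0 (uniform boundedness of the identifier errors, Lemma 1). -/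

import Mathlib

/-! Along the error dynamics `V_A' = -2|ε̃|² - ⟨ε, Ãξ⟩ / (1 + ν|ξ||ε|)`. Since `Ãξ = ε - ε̃`,
completing the square gives `⟨ε, Ãξ⟩ ≥ -|ε̃|²/4`, and the normalization is at least `1`, so the
cross term is at most `|ε̃|²`. Hence `V_A' ≤ -|ε̃|²` and `V_A` is antitone. -/

open Matrix

attribute [local instance] Matrix.normedAddCommGroup Matrix.normedSpace

/-- Euclidean norm of a vector in `ℝⁿ`. -/
noncomputable def vecNorm {n : ℕ} (v : Fin n → ℝ) : ℝ := Real.sqrt (v ⬝ᵥ v)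

/-- Squared Frobenius norm of a real matrix. -/
noncomputable def frobSq {p q : ℕ} (M : Matrix (Fin p) (Fin q) ℝ) : ℝ :=
  ∑ i, ∑ j, (M i j) ^ 2

lemma vecNorm_sq {n : ℕ} (v : Fin n → ℝ) : vecNorm v ^ 2 = v ⬝ᵥ v :=
  Real.sq_sqrt (by simpa using dotProduct_self_star_nonneg v)

lemma frobSq_eq_sum_dotProduct {p q : ℕ} (M : Matrix (Fin p) (Fin q) ℝ) :
    frobSq M = ∑ i, M i ⬝ᵥ M i := by
  simp only [frobSq, dotProduct, sq]

lemma sum_dotProduct_smul_vecMulVec {R ι κ : Type*} [CommSemiring R] [Fintype ι] [Fintype κ]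
    (M : Matrix ι κ R) (c : R) (e : ι → R) (x : κ → R) :
    ∑ i, M i ⬝ᵥ (c • vecMulVec e x) i = c * (e ⬝ᵥ (M *ᵥ x)) := by
  simp only [dotProduct, Matrix.smul_apply, vecMulVec_apply, mulVec, smul_eq_mul, Finset.mul_sum]
  exact Finset.sum_congr rfl fun i _ => Finset.sum_congr rfl fun j _ => by ring

section

variable {ι : Type*} [Fintype ι]

lemma HasDerivAt.dotProduct_self {f : ℝ → ι → ℝ} {f' : ι → ℝ} {t : ℝ}
    (hf : HasDerivAt f f' t) : HasDerivAt (fun s => f s ⬝ᵥ f s) (2 * (f t ⬝ᵥ f')) t := by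
  have hcoord (i : ι) : HasDerivAt (fun s => f s i) (f' i) t := hasDerivAt_pi.1 hf i
  refine (HasDerivAt.fun_sum (u := Finset.univ) fun i _ =>
    (hcoord i).fun_mul (hcoord i)).congr_deriv ?_
  rw [dotProduct, Finset.mul_sum]
  exact Finset.sum_congr rfl fun i _ => by ring

/-- Completing the square: `4 e ⬝ᵥ (e - u) + u ⬝ᵥ u = (2e - u) ⬝ᵥ (2e - u) ≥ 0`. -/
lemma neg_dotProduct_self_div_four_le (e u : ι → ℝ) : -(u ⬝ᵥ u) / 4 ≤ e ⬝ᵥ (e - u) := by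
  have hsq : 0 ≤ ((2 : ℝ) • e - u) ⬝ᵥ ((2 : ℝ) • e - u) := by
    simpa using dotProduct_self_star_nonneg ((2 : ℝ) • e - u)
  simp only [sub_dotProduct, dotProduct_sub, smul_dotProduct, dotProduct_smul, smul_eq_mul,
    dotProduct_comm u e] at hsq ⊢
  linarith

lemma neg_dotProduct_self_le_inv_mul_dotProduct_sub {D : ℝ} (hD : 1 ≤ D) (e u : ι → ℝ) :
    -(u ⬝ᵥ u) ≤ D⁻¹ * (e ⬝ᵥ (e - u)) := by
  have hu : 0 ≤ u ⬝ᵥ u := by simpa using dotProduct_self_star_nonneg u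
  calc -(u ⬝ᵥ u) ≤ D⁻¹ * -(u ⬝ᵥ u) := by
        have : D⁻¹ ≤ 1 := inv_le_one_of_one_le₀ hD
        nlinarith
    _ ≤ D⁻¹ * (e ⬝ᵥ (e - u)) := by
        have := neg_dotProduct_self_div_four_le e u
        gcongr
        linarith

end

lemma HasDerivAt.frobSq {p q : ℕ} {A : ℝ → Matrix (Fin p) (Fin q) ℝ}
    {A' : Matrix (Fin p) (Fin q) ℝ} {t : ℝ} (hA : HasDerivAt A A' t) :
    HasDerivAt (fun s => frobSq (A s)) (2 * ∑ i, A t i ⬝ᵥ A' i) t := by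
  simp only [frobSq_eq_sum_dotProduct, Finset.mul_sum]
  exact HasDerivAt.fun_sum fun i _ => (hasDerivAt_pi.1 hA i).dotProduct_self

lemma hasDerivAt_identifier_lyapunov {n : ℕ} {lam γ D t : ℝ} (hlam : lam ≠ 0) (hγ : γ ≠ 0)
    {etil : ℝ → Fin n → ℝ} {Atil : ℝ → Matrix (Fin n) (Fin n) ℝ} {e x : Fin n → ℝ}
    (hetil : HasDerivAt etil (-lam • etil t) t)
    (hAtil : HasDerivAt Atil ((-(γ / D)) • vecMulVec e x) t) :
    HasDerivAt (fun s => lam⁻¹ * (etil s ⬝ᵥ etil s) + (2 * γ)⁻¹ * frobSq (Atil s))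
      (-2 * (etil t ⬝ᵥ etil t) - D⁻¹ * (e ⬝ᵥ (Atil t *ᵥ x))) t := by
  refine ((hetil.dotProduct_self.const_mul lam⁻¹).fun_add
    (hAtil.frobSq.const_mul (2 * γ)⁻¹)).congr_deriv ?_
  rw [dotProduct_smul, smul_eq_mul, sum_dotProduct_smul_vecMulVec]
  field_simp
  ring

/-- Lemma 1: identifier Lyapunov decrease. With `ε = Ãξ + ε̃`,
`ε̃' = −λε̃` and the normalized gradient law `Ã' = −γ εξᵀ/(1 + ν|ξ||ε|)`, the function
`V_A = λ⁻¹|ε̃|² + (2γ)⁻¹‖Ã‖_F²` satisfies `V_A' ≤ −|ε̃|² ≤ 0`, hence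
`V_A(t) ≤ V_A(0)` for all `t ≥ 0` (uniform boundedness of the identifier errors). -/
theorem identifier_lyapunov_boundedness {n : ℕ}
    (lam γ ν : ℝ) (hlam : 0 < lam) (hγ : 0 < γ) (hν : 0 < ν)
    (ξ etil : ℝ → Fin n → ℝ) (Atil : ℝ → Matrix (Fin n) (Fin n) ℝ)
    (eps : ℝ → Fin n → ℝ)
    (heps : ∀ t, eps t = Atil t *ᵥ ξ t + etil t)
    (hetil : ∀ t, HasDerivAt etil (-lam • etil t) t)
    (hAtil : ∀ t, HasDerivAt Atil
      ((-(γ / (1 + ν * vecNorm (ξ t) * vecNorm (eps t)))) •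
        Matrix.vecMulVec (eps t) (ξ t)) t)
    (VA : ℝ → ℝ)
    (hVA : ∀ t, VA t = lam⁻¹ * (vecNorm (etil t)) ^ 2 + (2 * γ)⁻¹ * frobSq (Atil t)) :
    (∀ t, deriv VA t ≤ -(vecNorm (etil t)) ^ 2 ∧ -(vecNorm (etil t)) ^ 2 ≤ 0) ∧
    (∀ t, 0 ≤ t →
      lam⁻¹ * (vecNorm (etil t)) ^ 2 + (2 * γ)⁻¹ * frobSq (Atil t) ≤
        lam⁻¹ * (vecNorm (etil 0)) ^ 2 + (2 * γ)⁻¹ * frobSq (Atil 0)) := by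
  have hD (t : ℝ) : 1 ≤ 1 + ν * vecNorm (ξ t) * vecNorm (eps t) := by
    have := mul_nonneg (mul_nonneg hν.le (Real.sqrt_nonneg (ξ t ⬝ᵥ ξ t)))
      (Real.sqrt_nonneg (eps t ⬝ᵥ eps t))
    unfold vecNorm
    linarith
  have hVA_eq : VA = fun s => lam⁻¹ * (etil s ⬝ᵥ etil s) + (2 * γ)⁻¹ * frobSq (Atil s) :=
    funext fun s => by rw [hVA, vecNorm_sq]
  have hderiv (t : ℝ) := hVA_eq ▸
    hasDerivAt_identifier_lyapunov hlam.ne' hγ.ne' (hetil t) (hAtil t)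
  have hdecay (t : ℝ) : deriv VA t ≤ -(vecNorm (etil t)) ^ 2 := by
    have hAξ : Atil t *ᵥ ξ t = eps t - etil t := by rw [heps]; abel
    have := neg_dotProduct_self_le_inv_mul_dotProduct_sub (hD t) (eps t) (etil t)
    rw [(hderiv t).deriv, vecNorm_sq, hAξ]
    linarith
  have hnonpos (t : ℝ) : -(vecNorm (etil t)) ^ 2 ≤ 0 := neg_nonpos.2 (sq_nonneg _)
  refine ⟨fun t => ⟨hdecay t, hnonpos t⟩, fun t ht => ?_⟩
  have hanti := antitone_of_deriv_nonpos (fun s => (hderiv s).differentiableAt)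
    fun s => (hdecay s).trans (hnonpos s)
  simpa only [hVA] using hanti ht
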